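/- Let d > 0. There is a constant C_d > 0, depending only on d, such that for every T ≥ 4d and every C¹ function w : ℝ × ℝ³ → ℂ with w(t,x) = 0 whenever |x| < t − 2d, one has ∫_{S²} ∫_{T/2}^{T} |w(t, (T−t)ω)|² (T−t)² dt dω ≤ C_d ∫_{S²} ∫_{T/2}^{T} | (∂_t w − ω·∇_x w)(t, (T−t)ω) |² (T−t)² dt dω. -/

import Mathlib

noncomputable section

open Metric MeasureTheory

/-- ℝ³ as a Euclidean space. -/
abbrev E3 : Type := EuclideanSpace ℝ (Fin 3)

/-- space-time ℝ_t × ℝ³_x -/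
abbrev P3 : Type := ℝ × E3

/-- the unit sphere S² ⊂ ℝ³ -/
abbrev S2 : Type := Metric.sphere (0 : E3) 1

/-- the standard surface measure on S² -/
def sphMeasure : Measure S2 := (volume : Measure E3).toSphere

/-- time derivative ∂_t w -/
def dtD (w : P3 → ℂ) (p : P3) : ℂ := fderiv ℝ w p (1, 0)

/-- directional spatial derivative ω·∇_x w -/
def dirD (ω : S2) (w : P3 → ℂ) (p : P3) : ℂ := fderiv ℝ w p (0, (ω : E3))

lemma my_cs {a b : ℝ} (hab : a ≤ b) {f : ℝ → ℝ} (hf : Continuous f) (hfpos : ∀ x, 0 ≤ f x) :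
    (∫ x in Set.Icc a b, f x) ^ 2 ≤ (b - a) * ∫ x in Set.Icc a b, f x ^ 2 := by
  set μ := (volume : Measure ℝ).restrict (Set.Icc a b) with hμ
  have hfin : IsFiniteMeasure μ := by
    constructor
    rw [hμ, Measure.restrict_apply_univ, Real.volume_Icc]
    exact ENNReal.ofReal_lt_top
  have hpq : Real.HolderConjugate 2 2 := by constructor <;> norm_num
  obtain ⟨M, hM⟩ := (isCompact_Icc (a := a) (b := b)).exists_bound_of_continuousOn hf.continuousOn
  have hmem : MemLp f (ENNReal.ofReal 2) μ := by
    refine MemLp.of_bound (hf.aestronglyMeasurable) M ?_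
    rw [hμ, ae_restrict_iff' measurableSet_Icc]
    filter_upwards with x hx
    exact hM x hx
  have hmem1 : MemLp (fun _ : ℝ => (1 : ℝ)) (ENNReal.ofReal 2) μ := memLp_const 1
  have key := integral_mul_le_Lp_mul_Lq_of_nonneg hpq
    (Filter.Eventually.of_forall fun _ => zero_le_one)
    (Filter.Eventually.of_forall fun x => hfpos x) hmem1 hmem
  simp only [one_mul] at key
  have h1 : (∫ x, (1:ℝ) ^ (2:ℝ) ∂μ) = b - a := by
    simp [hμ, Real.volume_Icc, ENNReal.toReal_ofReal (sub_nonneg.2 hab), hab]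
  have h2 : (∫ x, f x ^ (2:ℝ) ∂μ) = ∫ x, f x ^ 2 ∂μ := by
    refine integral_congr_ae (Filter.Eventually.of_forall fun x => ?_)
    show f x ^ (2:ℝ) = f x ^ (2:ℕ)
    rw [show ((2:ℝ)) = ((2:ℕ):ℝ) by norm_num, Real.rpow_natCast]
  rw [h1, h2] at key
  have hI : 0 ≤ ∫ x, f x ^ 2 ∂μ := integral_nonneg fun x => sq_nonneg _
  have hint : 0 ≤ ∫ x, f x ∂μ := integral_nonneg fun x => hfpos x
  calc (∫ x, f x ∂μ) ^ 2 ≤ ((b - a) ^ (1/(2:ℝ)) * (∫ x, f x ^ 2 ∂μ) ^ (1/(2:ℝ))) ^ 2 := by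
        exact pow_le_pow_left₀ hint key 2
    _ = (b - a) * ∫ x, f x ^ 2 ∂μ := by
        rw [mul_pow, ← Real.rpow_natCast ((b-a) ^ (1/(2:ℝ))) 2, ← Real.rpow_natCast ((∫ x, f x ^ 2 ∂μ) ^ (1/(2:ℝ))) 2,
          ← Real.rpow_mul (sub_nonneg.2 hab), ← Real.rpow_mul hI]
        norm_num

lemma pointwise_bound (d T : ℝ) (hd : 0 < d) (hT : 4 * d ≤ T) (w : P3 → ℂ)
    (hw : ContDiff ℝ 1 w) (hsupp : ∀ p : P3, ‖p.2‖ < p.1 - 2 * d → w p = 0) (ω : S2) :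
    (∫ t in Set.Icc (T / 2) T, ‖w (t, (T - t) • (ω : E3))‖ ^ 2 * (T - t) ^ 2)
      ≤ 4 * d ^ 2 * ∫ t in Set.Icc (T / 2) T,
          ‖dtD w (t, (T - t) • (ω : E3)) - dirD ω w (t, (T - t) • (ω : E3))‖ ^ 2
            * (T - t) ^ 2 := by
  set c : E3 := (ω : E3) with hc
  have hcnorm : ‖c‖ = 1 := by
    have := ω.2
    simp only [mem_sphere_iff_norm, sub_zero] at this
    exact this
  set γ : ℝ → P3 := fun t => (t, (T - t) • c) with hγdef
  set D : ℝ → ℂ := fun t => (fderiv ℝ w (γ t)) ((1 : ℝ), -c) with hD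
  have hwdiff : Differentiable ℝ w := hw.differentiable one_ne_zero
  -- rewrite the RHS integrand
  have hDeq : ∀ t : ℝ, dtD w (γ t) - dirD ω w (γ t) = D t := by
    intro t
    have : ((1 : ℝ), (0 : E3)) - ((0 : ℝ), c) = ((1 : ℝ), -c) := by
      simp [Prod.ext_iff]
    rw [hD, dtD, dirD, ← hc, ← ContinuousLinearMap.map_sub, this]
  -- derivative of `w ∘ γ`
  have hγ : ∀ t : ℝ, HasDerivAt γ ((1 : ℝ), -c) t := by
    intro t
    have h2 : HasDerivAt (fun s : ℝ => (T - s) • c) ((-1 : ℝ) • c) t :=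
      (((hasDerivAt_id t).const_sub T)).smul_const c
    have := (hasDerivAt_id t).prodMk h2
    simpa [neg_one_smul] using this
  have hg : ∀ t : ℝ, HasDerivAt (fun s => w (γ s)) (D t) t := fun t =>
    ((hwdiff (γ t)).hasFDerivAt).comp_hasDerivAt t (hγ t)
  -- continuity
  have hγc : Continuous γ := by
    apply Continuous.prodMk continuous_id
    exact (continuous_const.sub continuous_id).smul continuous_const
  have hfc : Continuous fun t => fderiv ℝ w (γ t) :=
    (hw.continuous_fderiv one_ne_zero).comp hγc
  have hDc : Continuous D := hfc.clm_apply continuous_const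
  have hwc : Continuous fun t => w (γ t) := (hw.continuous).comp hγc
  set b : ℝ := T / 2 + d with hb
  have hb1 : T / 2 ≤ b := by simp [hb]; linarith
  have hb2 : b ≤ T := by simp [hb]; linarith
  have hbT : b < T := by simp [hb]; linarith
  -- vanishing of w on the cone beyond b
  have hγnorm : ∀ t : ℝ, t ≤ T → ‖(γ t).2‖ = T - t := by
    intro t ht
    simp only [hγdef]
    rw [norm_smul, hcnorm, Real.norm_eq_abs, abs_of_nonneg (by linarith), mul_one]
  have hgzero : ∀ t : ℝ, b < t → t ≤ T → w (γ t) = 0 := by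
    intro t ht1 ht2
    apply hsupp
    rw [hγnorm t ht2]
    show T - t < t - 2 * d
    rw [hb] at ht1; linarith
  -- vanishing of D beyond b
  have hDzero : ∀ t ∈ Set.Ioo b T, D t = 0 := by
    intro t ht
    have hU : IsOpen {p : P3 | ‖p.2‖ < p.1 - 2 * d} := by
      have : Continuous fun p : P3 => p.1 - 2 * d - ‖p.2‖ := by fun_prop
      have := isOpen_lt (continuous_norm.comp continuous_snd)
        ((continuous_fst.sub continuous_const) : Continuous fun p : P3 => p.1 - 2 * d)
      exact this
    have hmem : γ t ∈ {p : P3 | ‖p.2‖ < p.1 - 2 * d} := by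
      simp only [Set.mem_setOf_eq]
      rw [hγnorm t ht.2.le]
      show T - t < t - 2 * d
      rw [hb] at ht; have := ht.1; linarith
    have hev : w =ᶠ[nhds (γ t)] fun _ => (0 : ℂ) :=
      Filter.eventuallyEq_of_mem (hU.mem_nhds hmem) fun p hp => hsupp p hp
    rw [hD]
    simp only
    rw [hev.fderiv_eq, fderiv_fun_const]
    simp
  -- FTC
  have hftc : ∀ t ∈ Set.Icc (T / 2) T, w (γ t) = -∫ s in t..T, D s := by
    intro t ht
    have := intervalIntegral.integral_eq_sub_of_hasDerivAt
      (f := fun s => w (γ s)) (f' := D) (a := t) (b := T)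
      (fun s _ => hg s) ((hDc.intervalIntegrable t T))
    rw [this]
    show w (γ t) = -(w (γ T) - w (γ t))
    rw [hgzero T hbT le_rfl]
    ring
  -- integral of D over [b, T] vanishes
  have hae : ∀ᵐ x : ℝ, x ≠ T := by
    rw [ae_iff]
    simpa using measure_singleton (T : ℝ)
  have hIbT : ∫ s in b..T, D s = 0 := by
    have h0 : ∫ s in b..T, D s = ∫ s in b..T, (0 : ℂ) := by
      apply intervalIntegral.integral_congr_ae
      filter_upwards [hae] with x hx hmem
      rw [Set.uIoc_of_le hb2] at hmem
      exact hDzero x ⟨hmem.1, lt_of_le_of_ne hmem.2 hx⟩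
    simpa using h0
  have hDnc : Continuous fun s => ‖D s‖ := hDc.norm
  set I2 : ℝ := ∫ s in Set.Icc (T / 2) b, ‖D s‖ ^ 2 with hI2def
  have hI2nonneg : 0 ≤ I2 := integral_nonneg fun s => sq_nonneg _
  have hnormbound : ∀ t ∈ Set.Icc (T / 2) T, ‖w (γ t)‖ ≤ ∫ s in Set.Icc (T / 2) b, ‖D s‖ := by
    intro t ht
    have hnn : 0 ≤ ∫ s in Set.Icc (T / 2) b, ‖D s‖ := integral_nonneg fun s => norm_nonneg _
    rcases le_or_gt t b with h | h
    · rw [hftc t ht, norm_neg]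
      have hsplit : ∫ s in t..T, D s = (∫ s in t..b, D s) + ∫ s in b..T, D s :=
        (intervalIntegral.integral_add_adjacent_intervals (hDc.intervalIntegrable t b)
          (hDc.intervalIntegrable b T)).symm
      rw [hsplit, hIbT, add_zero]
      calc ‖∫ s in t..b, D s‖ ≤ ∫ s in t..b, ‖D s‖ :=
            intervalIntegral.norm_integral_le_integral_norm h
        _ ≤ ∫ s in (T / 2)..b, ‖D s‖ :=
            intervalIntegral.integral_mono_interval ht.1 h le_rfl
              (Filter.Eventually.of_forall fun s => norm_nonneg _)
              (hDnc.intervalIntegrable _ _)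
        _ = ∫ s in Set.Icc (T / 2) b, ‖D s‖ := by
            rw [intervalIntegral.integral_of_le hb1, ← integral_Icc_eq_integral_Ioc]
    · rw [hgzero t h ht.2]
      simpa using hnn
  have hkey : ∀ t ∈ Set.Icc (T / 2) T, ‖w (γ t)‖ ^ 2 ≤ d * I2 := by
    intro t ht
    calc ‖w (γ t)‖ ^ 2 ≤ (∫ s in Set.Icc (T / 2) b, ‖D s‖) ^ 2 :=
          pow_le_pow_left₀ (norm_nonneg _) (hnormbound t ht) 2
      _ ≤ (b - T / 2) * I2 := my_cs hb1 hDnc fun s => norm_nonneg _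
      _ = d * I2 := by rw [hb]; ring_nf
  -- rewrite goal in terms of γ and D
  have hγpt : ∀ t : ℝ, ((t, (T - t) • c) : P3) = γ t := fun _ => rfl
  simp only [← hc, hγpt, hDeq]
  -- continuity of integrands
  have hcontL : Continuous fun t => ‖w (γ t)‖ ^ 2 * (T - t) ^ 2 :=
    ((hwc.norm.pow 2).mul ((continuous_const.sub continuous_id).pow 2))
  have hcontR : Continuous fun t => ‖D t‖ ^ 2 * (T - t) ^ 2 :=
    ((hDnc.pow 2).mul ((continuous_const.sub continuous_id).pow 2))
  set K : ℝ := ∫ t in Set.Icc (T / 2) T, ‖D t‖ ^ 2 * (T - t) ^ 2 with hKdef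
  have hKnonneg : 0 ≤ K :=
    integral_nonneg fun t => mul_nonneg (sq_nonneg _) (sq_nonneg _)
  -- split the LHS integral
  have hdisj : Disjoint (Set.Icc (T / 2) b) (Set.Ioc b T) := by
    apply Set.disjoint_left.mpr
    rintro x ⟨-, hx2⟩ ⟨hx3, -⟩
    exact absurd hx2 (not_le.mpr hx3)
  have hsplitIcc : Set.Icc (T / 2) T = Set.Icc (T / 2) b ∪ Set.Ioc b T :=
    (Set.Icc_union_Ioc_eq_Icc hb1 hb2).symm
  have hLsplit : (∫ t in Set.Icc (T / 2) T, ‖w (γ t)‖ ^ 2 * (T - t) ^ 2)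
      = (∫ t in Set.Icc (T / 2) b, ‖w (γ t)‖ ^ 2 * (T - t) ^ 2)
        + ∫ t in Set.Ioc b T, ‖w (γ t)‖ ^ 2 * (T - t) ^ 2 := by
    rw [hsplitIcc]
    exact setIntegral_union hdisj measurableSet_Ioc
      (hcontL.integrableOn_Icc)
      ((hcontL.integrableOn_Icc (a := b) (b := T)).mono_set Set.Ioc_subset_Icc_self)
  have hzero2 : (∫ t in Set.Ioc b T, ‖w (γ t)‖ ^ 2 * (T - t) ^ 2) = 0 := by
    have heqz : Set.EqOn (fun t => ‖w (γ t)‖ ^ 2 * (T - t) ^ 2) (fun _ => (0 : ℝ))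
        (Set.Ioc b T) := by
      intro t ht
      simp [hgzero t ht.1 ht.2]
    rw [setIntegral_congr_fun measurableSet_Ioc heqz, integral_zero]
  have hbound1 : (∫ t in Set.Icc (T / 2) b, ‖w (γ t)‖ ^ 2 * (T - t) ^ 2)
      ≤ d * (d * I2 * (T / 2) ^ 2) := by
    have h1 : (∫ t in Set.Icc (T / 2) b, ‖w (γ t)‖ ^ 2 * (T - t) ^ 2)
        ≤ ∫ _t in Set.Icc (T / 2) b, d * I2 * (T / 2) ^ 2 := by
      apply setIntegral_mono_on hcontL.integrableOn_Icc ((integrableOn_const_iff (C := d * I2 * (T / 2) ^ 2)).mpr ?_)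
        measurableSet_Icc
      · intro t ht
        have ht2 : t ∈ Set.Icc (T / 2) T := ⟨ht.1, ht.2.trans hb2⟩
        have h3 : (T - t) ^ 2 ≤ (T / 2) ^ 2 :=
          pow_le_pow_left₀ (by linarith [ht2.2]) (by linarith [ht.1]) 2
        exact mul_le_mul (hkey t ht2) h3 (sq_nonneg _)
          (mul_nonneg hd.le hI2nonneg)
      · right
        rw [Real.volume_Icc]
        exact ENNReal.ofReal_lt_top
    rw [setIntegral_const] at h1
    rw [measureReal_def, Real.volume_Icc] at h1
    rw [ENNReal.toReal_ofReal (by linarith : (0:ℝ) ≤ b - T / 2)] at h1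
    have hbd : b - T / 2 = d := by rw [hb]; ring
    rw [hbd, smul_eq_mul] at h1
    exact h1
  have hmpos : 0 < T / 2 - d := by linarith
  have hI2K : (T / 2 - d) ^ 2 * I2 ≤ K := by
    have heq : (T / 2 - d) ^ 2 * I2 = ∫ s in Set.Icc (T / 2) b, (T / 2 - d) ^ 2 * ‖D s‖ ^ 2 := by
      rw [MeasureTheory.integral_const_mul]
    rw [heq]
    calc (∫ s in Set.Icc (T / 2) b, (T / 2 - d) ^ 2 * ‖D s‖ ^ 2)
        ≤ ∫ s in Set.Icc (T / 2) b, ‖D s‖ ^ 2 * (T - s) ^ 2 := by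
          apply setIntegral_mono_on ((continuous_const.mul (hDnc.pow 2)).integrableOn_Icc)
            ((hcontR.integrableOn_Icc (a := T / 2) (b := T)).mono_set
              (Set.Icc_subset_Icc_right hb2)) measurableSet_Icc
          intro s hs
          have h4 : (T / 2 - d) ^ 2 ≤ (T - s) ^ 2 :=
            pow_le_pow_left₀ hmpos.le (by rw [hb] at hs; linarith [hs.2]) 2
          calc (T / 2 - d) ^ 2 * ‖D s‖ ^ 2 ≤ (T - s) ^ 2 * ‖D s‖ ^ 2 :=
                mul_le_mul_of_nonneg_right h4 (sq_nonneg _)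
            _ = ‖D s‖ ^ 2 * (T - s) ^ 2 := by ring
      _ ≤ K := by
          rw [hKdef]
          apply setIntegral_mono_set hcontR.integrableOn_Icc
            (Filter.Eventually.of_forall fun t => mul_nonneg (sq_nonneg _) (sq_nonneg _))
            (Set.Icc_subset_Icc_right hb2).eventuallyLE
  rw [hLsplit, hzero2, add_zero]
  have h5 : (T / 2) ^ 2 ≤ 4 * ((T / 2 - d) ^ 2) := by nlinarith
  calc (∫ t in Set.Icc (T / 2) b, ‖w (γ t)‖ ^ 2 * (T - t) ^ 2)
      ≤ d * (d * I2 * (T / 2) ^ 2) := hbound1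
    _ = d ^ 2 * I2 * (T / 2) ^ 2 := by ring
    _ ≤ d ^ 2 * I2 * (4 * ((T / 2 - d) ^ 2)) :=
        mul_le_mul_of_nonneg_left h5 (mul_nonneg (sq_nonneg d) hI2nonneg)
    _ = 4 * d ^ 2 * ((T / 2 - d) ^ 2 * I2) := by ring
    _ ≤ 4 * d ^ 2 * K := mul_le_mul_of_nonneg_left hI2K (by positivity)

/-- Poincaré inequality on the backward light cone: for functions vanishing for
`|x| < t - 2d`, the L² norm on the backward cone `{r = T - t}` is controlled by
the L² norm of the derivative along the generators. -/
theorem backward_cone_poincare (d : ℝ) (hd : 0 < d) :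
    ∃ C : ℝ, 0 < C ∧ ∀ T : ℝ, 4 * d ≤ T → ∀ w : P3 → ℂ, ContDiff ℝ 1 w →
      (∀ p : P3, ‖p.2‖ < p.1 - 2 * d → w p = 0) →
      (∫ ω : S2, (∫ t in Set.Icc (T / 2) T,
          ‖w (t, (T - t) • (ω : E3))‖ ^ 2 * (T - t) ^ 2) ∂sphMeasure)
        ≤ C * ∫ ω : S2, (∫ t in Set.Icc (T / 2) T,
            ‖dtD w (t, (T - t) • (ω : E3)) - dirD ω w (t, (T - t) • (ω : E3))‖ ^ 2
              * (T - t) ^ 2) ∂sphMeasure := by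
  refine ⟨4 * d ^ 2, by positivity, fun T hT w hw hsupp => ?_⟩
  haveI hfin : IsFiniteMeasure sphMeasure := by unfold sphMeasure; infer_instance
  have hTT : T / 2 ≤ T := by linarith
  set Φ : S2 → ℝ → ℝ := fun ω t =>
    ‖dtD w (t, (T - t) • (ω : E3)) - dirD ω w (t, (T - t) • (ω : E3))‖ ^ 2 * (T - t) ^ 2
    with hΦ
  -- continuity of the integrand in both variables
  have hptc : Continuous fun p : S2 × ℝ => ((p.2, (T - p.2) • ((p.1 : S2) : E3)) : P3) :=
    continuous_snd.prodMk ((continuous_const.sub continuous_snd).smul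
      (continuous_subtype_val.comp continuous_fst))
  have hfd : Continuous fun p : S2 × ℝ =>
      fderiv ℝ w ((p.2, (T - p.2) • ((p.1 : S2) : E3)) : P3) :=
    (hw.continuous_fderiv one_ne_zero).comp hptc
  have h1 : Continuous fun p : S2 × ℝ =>
      dtD w ((p.2, (T - p.2) • ((p.1 : S2) : E3)) : P3) :=
    hfd.clm_apply continuous_const
  have h2 : Continuous fun p : S2 × ℝ =>
      dirD p.1 w ((p.2, (T - p.2) • ((p.1 : S2) : E3)) : P3) :=
    hfd.clm_apply (continuous_const.prodMk (continuous_subtype_val.comp continuous_fst))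
  have hΦc : Continuous (Function.uncurry Φ) :=
    ((h1.sub h2).norm.pow 2).mul ((continuous_const.sub continuous_snd).pow 2)
  have hGeq : ∀ ω : S2, (∫ t in Set.Icc (T / 2) T, Φ ω t) = ∫ t in (T / 2)..T, Φ ω t := by
    intro ω
    rw [intervalIntegral.integral_of_le hTT, integral_Icc_eq_integral_Ioc]
  have hGc : Continuous fun ω : S2 => ∫ t in (T / 2)..T, Φ ω t :=
    intervalIntegral.continuous_parametric_intervalIntegral_of_continuous' hΦc _ _
  have hGint : Integrable (fun ω : S2 => ∫ t in Set.Icc (T / 2) T, Φ ω t) sphMeasure := by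
    have := hGc.integrable_of_hasCompactSupport
      (IsClosed.isCompact (isClosed_tsupport _)) (μ := sphMeasure)
    exact this.congr (Filter.Eventually.of_forall fun ω => (hGeq ω).symm)
  have h0 : (0 : S2 → ℝ) ≤ᵐ[sphMeasure] fun ω : S2 =>
      ∫ t in Set.Icc (T / 2) T, ‖w (t, (T - t) • (ω : E3))‖ ^ 2 * (T - t) ^ 2 :=
    Filter.Eventually.of_forall fun ω =>
      integral_nonneg fun t => mul_nonneg (sq_nonneg _) (sq_nonneg _)
  have hle : (fun ω : S2 =>
      ∫ t in Set.Icc (T / 2) T, ‖w (t, (T - t) • (ω : E3))‖ ^ 2 * (T - t) ^ 2)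
      ≤ᵐ[sphMeasure] fun ω : S2 => 4 * d ^ 2 * ∫ t in Set.Icc (T / 2) T, Φ ω t :=
    Filter.Eventually.of_forall fun ω => pointwise_bound d T hd hT w hw hsupp ω
  calc (∫ ω : S2, (∫ t in Set.Icc (T / 2) T,
          ‖w (t, (T - t) • (ω : E3))‖ ^ 2 * (T - t) ^ 2) ∂sphMeasure)
      ≤ ∫ ω : S2, 4 * d ^ 2 * (∫ t in Set.Icc (T / 2) T, Φ ω t) ∂sphMeasure :=
        integral_mono_of_nonneg h0 (hGint.const_mul _) hle
    _ = 4 * d ^ 2 * ∫ ω : S2, (∫ t in Set.Icc (T / 2) T, Φ ω t) ∂sphMeasure :=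
        integral_const_mul _ _
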